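/- arXiv:1708.08486 — 4 statements merged into one kernel-verified Lean document; each statement's English description precedes it below -/
import Mathlib

section
/- Let p be a prime, δ > 0, and n ≥ ⌊δ^{−2}⌋. For any function f: 𝔽_p^n → [0,1], there is a subspace H of 𝔽_p^n of codimension ⌊δ^{−2}⌋ which is δ-weakly-regular with respect to f. -/
open Finset
open scoped Classical

/-- Average of `f` over the affine translate `H + x`, i.e. the averaged function `f_H`. -/
noncomputable def cosetAvg {p n : ℕ} [NeZero p] (f : (Fin n → ZMod p) → ℝ)
    (H : Submodule (ZMod p) (Fin n → ZMod p)) (x : Fin n → ZMod p) : ℝ :=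
  (∑ y ∈ Finset.univ.filter (fun y => y - x ∈ H), f y) / (Nat.card H : ℝ)

/-- The Fourier coefficient `f̂(χ) = p^{-n} Σ_x f(x) χ(x)` of `f : 𝔽_p^n → ℝ`. -/
noncomputable def fpFourier {p n : ℕ} [NeZero p] (f : (Fin n → ZMod p) → ℝ)
    (χ : AddChar (Fin n → ZMod p) ℂ) : ℂ :=
  (∑ x, (f x : ℂ) * χ x) / (p : ℂ) ^ n

/-- `H` is `δ`-weakly-regular with respect to `f` if `|f̂(χ) − f̂_H(χ)| ≤ δ` for every
character `χ`. -/
def WeaklyRegular {p n : ℕ} [NeZero p] (δ : ℝ) (f : (Fin n → ZMod p) → ℝ)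
    (H : Submodule (ZMod p) (Fin n → ZMod p)) : Prop :=
  ∀ χ : AddChar (Fin n → ZMod p) ℂ, ‖fpFourier f χ - fpFourier (cosetAvg f H) χ‖ ≤ δ

/-!
By Parseval, `∑_χ |f̂(χ)|² = 𝔼 f² ≤ 1`, so at most `⌊δ⁻²⌋` characters have `|f̂(χ)| > δ`.
Averaging over the cosets of `H` multiplies `f̂(χ)` by the indicator of `χ` being trivial on `H`,
so every subspace contained in the kernels of these large characters is `δ`-weakly-regular.
Each kernel has codimension at most one, because a character takes only the `p` values of
the `p`-th roots of unity; hence their intersection has codimension at most `⌊δ⁻²⌋` and contains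
a subspace of codimension exactly `⌊δ⁻²⌋`.
-/

open Module

namespace Submodule
variable {K V : Type*} [DivisionRing K] [AddCommGroup V] [Module K V]

lemma finrank_le_finrank_finset_inf_add_card [FiniteDimensional K V] {ι : Type*}
    (s : Finset ι) (W : ι → Submodule K V) (hW : ∀ i ∈ s, finrank K V ≤ finrank K (W i) + 1) :
    finrank K V ≤ finrank K (s.inf W : Submodule K V) + s.card := by
  induction s using Finset.induction_on with
  | empty => rw [inf_empty, finrank_top, card_empty, add_zero]
  | insert a s ha ih =>
    rw [inf_insert, card_insert_of_notMem ha]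
    have hsup := finrank_sup_add_finrank_inf_eq (W a) (s.inf W)
    have hsup_le := (W a ⊔ s.inf W).finrank_le
    have hWa := hW a (mem_insert_self a s)
    have hs := ih fun i hi => hW i (mem_insert_of_mem hi)
    omega

lemma exists_le_finrank_eq (W : Submodule K V) {d : ℕ} (hd : d ≤ finrank K W) :
    ∃ U ≤ W, finrank K U = d := by
  obtain ⟨g, hg⟩ := exists_linearIndependent_of_le_finrank hd
  refine ⟨(span K (Set.range g)).map W.subtype, map_subtype_le _ _, ?_⟩
  rw [finrank_map_subtype_eq, finrank_span_eq_card hg, Fintype.card_fin]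

end Submodule

namespace AddChar

section Orthogonality
variable {G R : Type*} [AddCommGroup G] [Fintype G] [CommRing R]

lemma sum_addSubgroup_eq_ite [IsDomain R] (H : AddSubgroup G) (ψ : AddChar G R) :
    ∑ h : H, ψ h = if ∀ h ∈ H, ψ h = 1 then (Nat.card H : R) else 0 := by
  have hres := (ψ.compAddMonoidHom H.subtype).sum_eq_ite
  simp only [coe_compAddMonoidHom, Function.comp_apply, AddSubgroup.coe_subtype] at hres
  rw [hres, Nat.card_eq_fintype_card]
  congr 1
  simp [AddChar.ext_iff]

lemma sum_filter_sub_mem (H : AddSubgroup G) (ψ : AddChar G R) (y : G) :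
    ∑ x ∈ univ.filter (fun x => y - x ∈ H), ψ x = ψ y * ∑ h : H, ψ h := by
  rw [mul_sum]
  refine sum_bij' (fun x hx => ⟨x - y, by simpa using H.neg_mem (mem_filter.1 hx).2⟩)
    (fun h _ => y + h) (by simp) (by simp) (by simp) (by simp) (by simp [← map_add_eq_mul])

theorem sum_norm_sq_sum_mul_apply (f : G → ℂ) :
    ∑ ψ : AddChar G ℂ, ‖∑ a, f a * ψ a‖ ^ 2 = Fintype.card G * ∑ a, ‖f a‖ ^ 2 := by
  have expand (ψ : AddChar G ℂ) : ((‖∑ a, f a * ψ a‖ ^ 2 : ℝ) : ℂ) =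
      ∑ a, ∑ b, f a * starRingEnd ℂ (f b) * ψ (a - b) := by
    rw [Complex.ofReal_pow, ← Complex.mul_conj', map_sum, sum_mul_sum]
    refine sum_congr rfl fun a _ => sum_congr rfl fun b _ => ?_
    rw [map_mul, sub_eq_add_neg, map_add_eq_mul, map_neg_eq_conj]
    ring
  apply Complex.ofReal_injective
  rw [Complex.ofReal_sum]
  simp_rw [expand]
  rw [sum_comm]
  simp_rw [sum_comm (γ := AddChar G ℂ), ← mul_sum, sum_apply_eq_ite, sub_eq_zero,
    mul_ite, mul_zero, sum_ite_eq, mem_univ, if_true, Complex.mul_conj', mul_sum]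
  push_cast
  exact sum_congr rfl fun a _ => mul_comm _ _

end Orthogonality

section Kernel
variable {p : ℕ} {V R : Type*} [AddCommGroup V] [Module (ZMod p) V] [CommRing R]

variable (p) in
def kerSubmodule (ψ : AddChar V R) : Submodule (ZMod p) V :=
  AddSubgroup.toZModSubmodule p ψ.toAddMonoidHom.ker

lemma mem_kerSubmodule {ψ : AddChar V R} {x : V} : x ∈ ψ.kerSubmodule p ↔ ψ x = 1 := .rfl

lemma pow_apply_eq_one [NeZero p] (ψ : AddChar V R) (x : V) : ψ x ^ p = 1 := by
  rw [← map_nsmul_eq_pow, ← Nat.cast_smul_eq_nsmul (ZMod p), ZMod.natCast_self, zero_smul,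
    map_zero_eq_one]

lemma sub_mem_kerSubmodule {ψ : AddChar V R} {x y : V} (h : ψ x = ψ y) :
    x - y ∈ ψ.kerSubmodule p := by
  rw [mem_kerSubmodule, sub_eq_add_neg, map_add_eq_mul, h, ← map_add_eq_mul, add_neg_cancel,
    map_zero_eq_one]

lemma card_quotient_kerSubmodule_le [NeZero p] [IsDomain R] (ψ : AddChar V R) :
    Nat.card (V ⧸ ψ.kerSubmodule p) ≤ p := by
  have hroot (q : V ⧸ ψ.kerSubmodule p) : ψ q.out ∈ Polynomial.nthRootsFinset p (1 : R) :=
    (Polynomial.mem_nthRootsFinset (Nat.pos_of_neZero p) 1).2 (ψ.pow_apply_eq_one _)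
  have hinj : Function.Injective fun q : V ⧸ ψ.kerSubmodule p => ψ q.out := fun a b h => by
    simpa using (Submodule.Quotient.eq _).2 (sub_mem_kerSubmodule (p := p) h)
  calc Nat.card (V ⧸ ψ.kerSubmodule p)
      ≤ Nat.card (Polynomial.nthRootsFinset p (1 : R)) :=
        Nat.card_le_card_of_injective (fun q => ⟨ψ q.out, hroot q⟩)
          fun a b h => hinj (congrArg Subtype.val h)
    _ ≤ p := by
      rw [Nat.card_eq_finsetCard, Polynomial.nthRootsFinset_def]
      exact (Multiset.toFinset_card_le _).trans (Polynomial.card_nthRoots p 1)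

lemma finrank_le_finrank_kerSubmodule_add_one [Fact p.Prime] [IsDomain R] [Finite V]
    (ψ : AddChar V R) :
    finrank (ZMod p) V ≤ finrank (ZMod p) (ψ.kerSubmodule p) + 1 := by
  have hquot : p ^ finrank (ZMod p) (V ⧸ ψ.kerSubmodule p) ≤ p ^ 1 :=
    calc p ^ finrank (ZMod p) (V ⧸ ψ.kerSubmodule p)
        = Nat.card (V ⧸ ψ.kerSubmodule p) := by
          rw [natCard_eq_pow_finrank (K := ZMod p), Nat.card_zmod]
      _ ≤ p ^ 1 := (pow_one p).symm ▸ ψ.card_quotient_kerSubmodule_le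
  rw [← (ψ.kerSubmodule p).finrank_quotient_add_finrank, add_comm]
  gcongr
  exact (pow_le_pow_iff_right₀ (Fact.out : p.Prime).one_lt).1 hquot

end Kernel

end AddChar

section FiniteField
variable {p n : ℕ} [NeZero p]

lemma fpFourier_cosetAvg (f : (Fin n → ZMod p) → ℝ) (H : Submodule (ZMod p) (Fin n → ZMod p))
    (χ : AddChar (Fin n → ZMod p) ℂ) :
    fpFourier (cosetAvg f H) χ = if ∀ x ∈ H, χ x = 1 then fpFourier f χ else 0 := by
  have hsum : ∑ x, (cosetAvg f H x : ℂ) * χ x =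
      (∑ y, (f y : ℂ) * χ y) * ((∑ h : H.toAddSubgroup, χ h) / Nat.card H) := by
    calc ∑ x, (cosetAvg f H x : ℂ) * χ x
        = ∑ x, ∑ y ∈ univ.filter (fun y => y - x ∈ H), (f y : ℂ) * χ x / Nat.card H := by
          simp only [cosetAvg, Complex.ofReal_div, Complex.ofReal_sum, Complex.ofReal_natCast,
            sum_div, sum_mul, div_mul_eq_mul_div]
      _ = ∑ y, ∑ x ∈ univ.filter (fun x => y - x ∈ H), (f y : ℂ) * χ x / Nat.card H := by
          apply sum_comm'
          simp
      _ = ∑ y, (f y : ℂ) * χ y * ((∑ h : H.toAddSubgroup, χ h) / Nat.card H) := by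
          refine sum_congr rfl fun y _ => ?_
          have hy := AddChar.sum_filter_sub_mem H.toAddSubgroup χ y
          simp only [Submodule.mem_toAddSubgroup] at hy
          rw [← sum_div, ← mul_sum, hy]
          ring
      _ = _ := (sum_mul ..).symm
  have hcard : Nat.card H.toAddSubgroup = Nat.card H := rfl
  rw [fpFourier, fpFourier, hsum, AddChar.sum_addSubgroup_eq_ite, hcard]
  simp only [Submodule.mem_toAddSubgroup]
  split_ifs
  · field_simp
  · simp

lemma weaklyRegular_of_le_kerSubmodule {δ : ℝ} (hδ : 0 ≤ δ) (f : (Fin n → ZMod p) → ℝ)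
    {H : Submodule (ZMod p) (Fin n → ZMod p)}
    (hH : ∀ χ : AddChar (Fin n → ZMod p) ℂ, δ < ‖fpFourier f χ‖ → H ≤ χ.kerSubmodule p) :
    WeaklyRegular δ f H := by
  intro χ
  rw [fpFourier_cosetAvg]
  split_ifs with hχ
  · simpa using hδ
  · rw [sub_zero]
    exact le_of_not_gt fun hlt => hχ fun x hx => hH χ hlt hx

lemma sum_norm_sq_fpFourier (f : (Fin n → ZMod p) → ℝ) :
    ∑ χ, ‖fpFourier f χ‖ ^ 2 = (∑ x, f x ^ 2) / p ^ n := by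
  have hcard : (Fintype.card (Fin n → ZMod p) : ℝ) = p ^ n := by simp
  simp_rw [fpFourier, norm_div, norm_pow, Complex.norm_natCast, div_pow, ← sum_div,
    AddChar.sum_norm_sq_sum_mul_apply, hcard, Complex.norm_real, Real.norm_eq_abs, sq_abs]
  field_simp

lemma sum_norm_sq_fpFourier_le_one {f : (Fin n → ZMod p) → ℝ} (hf : ∀ x, |f x| ≤ 1) :
    ∑ χ, ‖fpFourier f χ‖ ^ 2 ≤ 1 := by
  rw [sum_norm_sq_fpFourier, div_le_one (pow_pos (Nat.cast_pos.2 (Nat.pos_of_neZero p)) n)]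
  calc ∑ x, f x ^ 2 ≤ ∑ _x : Fin n → ZMod p, (1 : ℝ) :=
        sum_le_sum fun x _ => (sq_le_one_iff_abs_le_one _).2 (hf x)
    _ = p ^ n := by simp

lemma card_filter_lt_norm_fpFourier_le {δ : ℝ} (hδ : 0 < δ) {f : (Fin n → ZMod p) → ℝ}
    (hf : ∀ x, |f x| ≤ 1) :
    #{χ | δ < ‖fpFourier f χ‖} ≤ ⌊1 / δ ^ 2⌋₊ := by
  refine Nat.le_floor ((le_div_iff₀ (by positivity)).2 ?_)
  calc (#{χ | δ < ‖fpFourier f χ‖} : ℝ) * δ ^ 2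
      = ∑ χ ∈ {χ | δ < ‖fpFourier f χ‖}, δ ^ 2 := by rw [sum_const, nsmul_eq_mul]
    _ ≤ ∑ χ ∈ {χ | δ < ‖fpFourier f χ‖}, ‖fpFourier f χ‖ ^ 2 :=
        sum_le_sum fun χ hχ => pow_le_pow_left₀ hδ.le (mem_filter.1 hχ).2.le 2
    _ ≤ ∑ χ, ‖fpFourier f χ‖ ^ 2 :=
        sum_le_sum_of_subset_of_nonneg (subset_univ _) fun _ _ _ => by positivity
    _ ≤ 1 := sum_norm_sq_fpFourier_le_one hf

end FiniteField

/-- The weak regularity lemma in `𝔽_p^n`. -/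
theorem weak_regularity_lemma (p n : ℕ) [Fact p.Prime] (δ : ℝ) (hδ : 0 < δ)
    (hn : ⌊1 / δ ^ 2⌋₊ ≤ n) (f : (Fin n → ZMod p) → ℝ) (hf : ∀ x, f x ∈ Set.Icc (0 : ℝ) 1) :
    ∃ H : Submodule (ZMod p) (Fin n → ZMod p),
      n - Module.finrank (ZMod p) H = ⌊1 / δ ^ 2⌋₊ ∧ WeaklyRegular δ f H := by
  set S := univ.filter fun χ : AddChar (Fin n → ZMod p) ℂ => δ < ‖fpFourier f χ‖
  have hS : #S ≤ ⌊1 / δ ^ 2⌋₊ :=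
    card_filter_lt_norm_fpFourier_le hδ fun x => abs_le.2 ⟨by linarith [(hf x).1], (hf x).2⟩
  have hinf := Submodule.finrank_le_finrank_finset_inf_add_card S (AddChar.kerSubmodule p)
    fun χ _ => χ.finrank_le_finrank_kerSubmodule_add_one
  rw [finrank_fin_fun] at hinf
  obtain ⟨H, hHS, hH⟩ := (S.inf (AddChar.kerSubmodule p)).exists_le_finrank_eq
    (d := n - ⌊1 / δ ^ 2⌋₊) (by omega)
  refine ⟨H, by omega, weaklyRegular_of_le_kerSubmodule hδ.le f fun χ hχ => ?_⟩
  exact hHS.trans (inf_le (mem_filter.2 ⟨mem_univ χ, hχ⟩))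
end

section
/- For every odd prime p and every positive integer n, there exists a subset A ⊆ 𝔽_p^n containing no nontrivial three-term arithmetic progression such that |A| ≥ ((p+1)/2)^n / (1 + n·((p−1)/2)²). -/
open Finset

set_option maxHeartbeats 1000000

/-- Alon's variant of the Behrend construction: a large subset of `𝔽_p^n` with no
nontrivial three-term arithmetic progression. -/
theorem behrend_type_lower_bound (p : ℕ) [Fact p.Prime] (hodd : Odd p) (n : ℕ) (hn : 0 < n) :
    ∃ A : Finset (Fin n → ZMod p),
      (∀ x d : Fin n → ZMod p, d ≠ 0 → ¬(x ∈ A ∧ x + d ∈ A ∧ x + d + d ∈ A)) ∧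
      (((p : ℝ) + 1) / 2) ^ n / (1 + n * (((p : ℝ) - 1) / 2) ^ 2) ≤ A.card := by
  obtain ⟨K, hK⟩ := hodd
  have hp : p = 2 * K + 1 := hK
  haveI : NeZero p := ⟨by omega⟩
  -- the set of allowed coordinate values
  set V : Finset (ZMod p) := (Finset.range (K+1)).image (Nat.cast : ℕ → ZMod p) with hV
  have hVcard : V.card = K + 1 := by
    rw [hV, Finset.card_image_of_injOn, Finset.card_range]
    intro a ha b hb hab
    simp only [Finset.coe_range, Set.mem_Iio] at ha hb
    have h1 : (a : ZMod p).val = a := ZMod.val_cast_of_lt (by omega)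
    have h2 : (b : ZMod p).val = b := ZMod.val_cast_of_lt (by omega)
    rw [hab] at h1; omega
  have hmemV : ∀ a : ZMod p, a ∈ V ↔ a.val ≤ K := by
    intro a
    constructor
    · rintro ha
      rw [hV, Finset.mem_image] at ha
      obtain ⟨m, hm, rfl⟩ := ha
      rw [Finset.mem_range] at hm
      rw [ZMod.val_cast_of_lt (by omega)]; omega
    · intro ha
      rw [hV, Finset.mem_image]
      exact ⟨a.val, Finset.mem_range.mpr (by omega),
        by simp [ZMod.natCast_val, ZMod.cast_id]⟩
  set B : Finset (Fin n → ZMod p) := Fintype.piFinset (fun _ => V) with hB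
  have hBcard : B.card = (K + 1) ^ n := by
    rw [hB, Fintype.card_piFinset]
    simp [hVcard]
  set s : (Fin n → ZMod p) → ℕ := fun x => ∑ i, (x i).val ^ 2 with hs
  set T : Finset ℕ := Finset.range (n * K ^ 2 + 1) with hT
  have hmaps : ∀ x ∈ B, s x ∈ T := by
    intro x hx
    rw [hT, Finset.mem_range]
    have : s x ≤ ∑ _i : Fin n, K ^ 2 := by
      apply Finset.sum_le_sum
      intro i _
      have : (x i).val ≤ K := (hmemV _).1 (Fintype.mem_piFinset.1 hx i)
      nlinarith
    simp at this
    omega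
  have hsplit : B.card = ∑ t ∈ T, (B.filter fun x => s x = t).card :=
    Finset.card_eq_sum_card_fiberwise hmaps
  have hTcard : T.card = n * K ^ 2 + 1 := by rw [hT, Finset.card_range]
  -- pigeonhole
  obtain ⟨t, ht, hfib⟩ : ∃ t ∈ T, B.card ≤ T.card * (B.filter fun x => s x = t).card := by
    by_contra hcon
    push_neg at hcon
    have hlt : ∑ t ∈ T, T.card * (B.filter fun x => s x = t).card < ∑ _t ∈ T, B.card := by
      apply Finset.sum_lt_sum_of_nonempty
      · rw [hT]; exact Finset.nonempty_range_iff.mpr (by omega)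
      · exact fun t htT => hcon t htT
    rw [← Finset.mul_sum, ← hsplit, Finset.sum_const, smul_eq_mul] at hlt
    exact lt_irrefl _ hlt
  refine ⟨B.filter fun x => s x = t, ?_, ?_⟩
  · -- no nontrivial 3-AP
    rintro x d hd ⟨hx, hy, hz⟩
    simp only [Finset.mem_filter] at hx hy hz
    have hxB := hx.1; have hyB := hy.1; have hzB := hz.1
    have hva : ∀ i, (x i).val ≤ K := fun i => (hmemV _).1 (Fintype.mem_piFinset.1 hxB i)
    have hvb : ∀ i, ((x + d) i).val ≤ K := fun i => (hmemV _).1 (Fintype.mem_piFinset.1 hyB i)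
    have hvc : ∀ i, ((x + d + d) i).val ≤ K := fun i => (hmemV _).1 (Fintype.mem_piFinset.1 hzB i)
    have key : ∀ i, (x i).val + ((x + d + d) i).val = 2 * ((x + d) i).val := by
      intro i
      have e : x i + (x + d + d) i = (x + d) i + (x + d) i := by
        simp only [Pi.add_apply]; ring
      have hval := congrArg ZMod.val e
      rw [ZMod.val_add, ZMod.val_add] at hval
      rw [Nat.mod_eq_of_lt (by have := hva i; have := hvc i; omega),
          Nat.mod_eq_of_lt (by have := hvb i; omega)] at hval
      omega
    -- integer sums of squares
    have hZsum : ∑ i, (((x i).val : ℤ) - (((x + d) i).val : ℤ)) ^ 2 = 0 := by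
      have expand : ∀ i : Fin n,
          2 * ((((x i).val : ℤ)) - (((x + d) i).val : ℤ)) ^ 2 =
            ((x i).val : ℤ) ^ 2 + (((x + d + d) i).val : ℤ) ^ 2
              - 2 * (((x + d) i).val : ℤ) ^ 2 := by
        intro i
        have h := key i
        have h' : ((x i).val : ℤ) + (((x + d + d) i).val : ℤ) = 2 * (((x + d) i).val : ℤ) := by
          exact_mod_cast congrArg (Nat.cast : ℕ → ℤ) h
        nlinarith [h']
      have hsum : 2 * ∑ i, ((((x i).val : ℤ)) - (((x + d) i).val : ℤ)) ^ 2 =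
          (∑ i, ((x i).val : ℤ) ^ 2) + (∑ i, (((x + d + d) i).val : ℤ) ^ 2)
            - 2 * ∑ i, (((x + d) i).val : ℤ) ^ 2 := by
        rw [Finset.mul_sum]
        rw [Finset.sum_congr rfl fun i _ => expand i]
        rw [Finset.sum_sub_distrib, Finset.sum_add_distrib, ← Finset.mul_sum]
      have hsx : (∑ i, ((x i).val : ℤ) ^ 2) = (t : ℤ) := by
        have := hx.2; rw [hs] at this; push_cast [← this]; norm_num
      have hsy : (∑ i, (((x + d) i).val : ℤ) ^ 2) = (t : ℤ) := by
        have := hy.2; rw [hs] at this; push_cast [← this]; norm_num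
      have hsz : (∑ i, (((x + d + d) i).val : ℤ) ^ 2) = (t : ℤ) := by
        have := hz.2; rw [hs] at this; push_cast [← this]; norm_num
      rw [hsx, hsy, hsz] at hsum
      linarith
    apply hd
    funext i
    have hterm : (((x i).val : ℤ) - (((x + d) i).val : ℤ)) ^ 2 = 0 := by
      have hnn : ∀ i ∈ Finset.univ, (0:ℤ) ≤ (((x i).val : ℤ) - (((x + d) i).val : ℤ)) ^ 2 :=
        fun i _ => sq_nonneg _
      exact (Finset.sum_eq_zero_iff_of_nonneg hnn).1 hZsum i (Finset.mem_univ i)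
    have hdiff : ((x i).val : ℤ) = (((x + d) i).val : ℤ) :=
      sub_eq_zero.mp (sq_eq_zero_iff.mp hterm)
    have hvv : (x i).val = ((x + d) i).val := by exact_mod_cast hdiff
    have hxi : x i = (x + d) i := ZMod.val_injective p hvv
    simp only [Pi.add_apply] at hxi
    exact (left_eq_add.mp hxi)
  · -- the cardinality bound
    have hAcard : (K + 1) ^ n ≤ (n * K ^ 2 + 1) * (B.filter fun x => s x = t).card := by
      rw [← hBcard, ← hTcard]; exact hfib
    have hp1 : ((p : ℝ) + 1) / 2 = (K : ℝ) + 1 := by rw [hp]; push_cast; ring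
    have hp2 : ((p : ℝ) - 1) / 2 = (K : ℝ) := by rw [hp]; push_cast; ring
    rw [hp1, hp2]
    rw [div_le_iff₀ (by positivity)]
    calc ((K : ℝ) + 1) ^ n ≤ ((n * K ^ 2 + 1 : ℕ) : ℝ) * ((B.filter fun x => s x = t).card : ℝ) := by
          exact_mod_cast hAcard
      _ = ((B.filter fun x => s x = t).card : ℝ) * (1 + n * (K:ℝ) ^ 2) := by push_cast; ring
end

section
/- For every prime p ≥ 19 and every integer n ≥ 10⁶, there exists a subset A ⊆ 𝔽_p^n containing no nontrivial three-term arithmetic progression such that |A| ≥ p^{0.782n} and |A| ≥ ((p+1)/2.0001)^{n−2}. -/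
/-!
The integer points of the box `{0, …, m - 1}ⁿ` on a fixed Euclidean sphere contain no nontrivial
three-term progression, because the ball is strictly convex (Behrend), and by pigeonhole some
sphere carries at least `mⁿ / (n m²)` of them. Take `m = (p + 1) / 2`: the coordinates of a sum
of two points of the box stay below `p`, so reduction mod `p` is injective on `box + box`, hence
maps the sphere injectively and creates no new progressions. What remains are the numerical inequalities `mⁿ / (n m²) ≥ p ^ (0.782 n)` and
`mⁿ / (n m²) ≥ (m / 1.00005) ^ (n - 2)` for `p ≥ 19` and `n ≥ 10⁶`.
-/

open Finset Behrend

lemma ThreeAPFree.eq_zero_of_add_mem {G : Type*} [AddCancelCommMonoid G] {s : Set G}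
    (hs : ThreeAPFree s) {x d : G} (h₀ : x ∈ s) (h₁ : x + d ∈ s) (h₂ : x + d + d ∈ s) :
    d = 0 :=
  add_eq_left.1 (hs h₀ h₁ h₂ (by abel)).symm

def natCastPi (R : Type*) [AddMonoidWithOne R] (n : ℕ) : (Fin n → ℕ) →+ (Fin n → R) :=
  (Nat.castAddMonoidHom R).compLeft (Fin n)

lemma natCastPi_injOn (p n : ℕ) :
    {x : Fin n → ℕ | ∀ i, x i < p}.InjOn (natCastPi (ZMod p) n) := by
  intro x hx y hy hxy
  funext i
  simpa [natCastPi, ZMod.val_cast_of_lt (hx i), ZMod.val_cast_of_lt (hy i)] using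
    congr_arg (fun z => (z i).val) hxy

lemma threeAPFree_image_natCastPi_sphere {p n m k : ℕ} (hm : 2 * m ≤ p + 1) :
    ThreeAPFree ((sphere n m k).image (natCastPi (ZMod p) n) : Set (Fin n → ZMod p)) := by
  rw [coe_image]
  refine threeAPFree_sphere.image' _ ((natCastPi_injOn p n).mono ?_)
  rw [Set.add_subset_iff]
  intro a ha b hb i
  have := mem_box.1 (sphere_subset_box ha) i
  have := mem_box.1 (sphere_subset_box hb) i
  rw [Pi.add_apply]
  omega

theorem exists_threeAPFree_card_ge {p m : ℕ} (hm : 2 * m ≤ p + 1) (n : ℕ) :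
    ∃ A : Finset (Fin n → ZMod p), ThreeAPFree (A : Set (Fin n → ZMod p)) ∧
      ((m ^ n :) / (n * m ^ 2 :) : ℝ) ≤ #A := by
  obtain ⟨k, hk⟩ := exists_large_sphere n m
  refine ⟨_, threeAPFree_image_natCastPi_sphere (k := k) hm, ?_⟩
  rwa [card_image_of_injOn ((natCastPi_injOn p n).mono fun x hx i => ?_)]
  have := mem_box.1 (sphere_subset_box hx) i
  omega

lemma mul_le_two_pow_of_le {c k₀ k : ℕ} (h₀ : c * k₀ ≤ 2 ^ k₀) (hc : c ≤ 2 ^ k₀)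
    (hk : k₀ ≤ k) : c * k ≤ 2 ^ k := by
  induction k, hk using Nat.le_induction with
  | base => exact h₀
  | succ k hk ih =>
    calc c * (k + 1) = c * k + c := by ring
      _ ≤ 2 ^ k + 2 ^ k := add_le_add ih (hc.trans (Nat.pow_le_pow_right two_pos hk))
      _ = 2 ^ (k + 1) := by ring

lemma pow_div_mul_pow_le_pow {a b g K : ℕ} (h : g * b ^ K ≤ a ^ K) (hba : b ≤ a) (e : ℕ) :
    g ^ (e / K) * b ^ e ≤ a ^ e := by
  calc g ^ (e / K) * b ^ e = (g * b ^ K) ^ (e / K) * b ^ (e % K) := by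
        rw [mul_pow, ← pow_mul, mul_assoc, ← pow_add, Nat.div_add_mod]
    _ ≤ (a ^ K) ^ (e / K) * a ^ (e % K) := by gcongr
    _ = a ^ e := by rw [← pow_mul, ← pow_add, Nat.div_add_mod]

lemma two_mul_pow_self_le {a : ℕ} (ha : 1 ≤ a) : 2 * a ^ a ≤ (a + 1) ^ a := by
  have hbern := one_add_mul_le_pow (a := (1 / a : ℚ))
    (by linarith [show (0 : ℚ) ≤ 1 / a by positivity]) a
  have ha' : (a : ℚ) ≠ 0 := by positivity
  rw [mul_one_div_cancel ha', one_add_div ha', div_pow, le_div_iff₀ (by positivity)] at hbern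
  exact_mod_cast (by linarith : (2 : ℚ) * a ^ a ≤ (a + 1) ^ a)

lemma hundred_mul_pow_le_two_pow {n : ℕ} (hn : 10 ^ 6 ≤ n) :
    (100 * n) ^ 1000 ≤ 2 ^ (n / 21) := by
  set L := Nat.log 2 n
  have hnL : n < 2 ^ (L + 1) := Nat.lt_pow_succ_log_self one_lt_two n
  have hL : 21000 * L + 168000 ≤ n := by
    have hLn : 2 ^ L ≤ n := Nat.pow_log_le_self 2 (by omega)
    rcases Nat.lt_or_ge L 40 with hL | hL
    · omega
    · have := mul_le_two_pow_of_le (c := 26000) (by norm_num) (by norm_num) hL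
      omega
  have h100 : 100 ^ 1000 ≤ 2 ^ 7000 := by decide +kernel
  calc (100 * n) ^ 1000 = 100 ^ 1000 * n ^ 1000 := mul_pow ..
    _ ≤ 2 ^ 7000 * (2 ^ (L + 1)) ^ 1000 :=
        Nat.mul_le_mul h100 (pow_le_pow_left₀ (by positivity) hnL.le _)
    _ = 2 ^ (1000 * L + 8000) := by rw [← pow_mul, ← pow_add]; congr 1; ring
    _ ≤ 2 ^ (n / 21) := Nat.pow_le_pow_right two_pos (by omega)

lemma nineteen_pow_782_mul_le {n : ℕ} (hn : 10 ^ 6 ≤ n) :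
    19 ^ (782 * n) * (n * 10 ^ 2) ^ 1000 ≤ 10 ^ (1000 * n) := by
  -- `10 ^ 1000 / 19 ^ 782 ≈ 2 ^ 0.048`, so a factor `2` is only gained per `21` coordinates.
  have hgain : 2 * (19 ^ 782) ^ 21 ≤ (10 ^ 1000) ^ 21 := by decide +kernel
  have hbase : 19 ^ 782 ≤ 10 ^ 1000 := by decide +kernel
  calc 19 ^ (782 * n) * (n * 10 ^ 2) ^ 1000 = (100 * n) ^ 1000 * (19 ^ 782) ^ n := by
        rw [pow_mul, mul_comm, show n * 10 ^ 2 = 100 * n by ring]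
    _ ≤ 2 ^ (n / 21) * (19 ^ 782) ^ n :=
        Nat.mul_le_mul_right _ (hundred_mul_pow_le_two_pow hn)
    _ ≤ (10 ^ 1000) ^ n := pow_div_mul_pow_le_pow hgain hbase n
    _ = 10 ^ (1000 * n) := (pow_mul ..).symm

lemma twentyThree_pow_782_mul_le {n : ℕ} (hn : 10 ^ 6 ≤ n) :
    23 ^ (782 * n) * (n * 12 ^ 2) ^ 1000 ≤ 12 ^ (1000 * n) := by
  have hlog : (n * 12 ^ 2) ^ 1000 ≤ 2 ^ (40 * n) :=
    calc (n * 12 ^ 2) ^ 1000 ≤ (2 * (100 * n)) ^ 1000 :=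
          pow_le_pow_left₀ (by positivity) (by omega) _
      _ = 2 ^ 1000 * (100 * n) ^ 1000 := mul_pow ..
      _ ≤ 2 ^ 1000 * 2 ^ (n / 21) := Nat.mul_le_mul_left _ (hundred_mul_pow_le_two_pow hn)
      _ ≤ 2 ^ (40 * n) := by rw [← pow_add]; exact Nat.pow_le_pow_right two_pos (by omega)
  calc 23 ^ (782 * n) * (n * 12 ^ 2) ^ 1000 ≤ 23 ^ (782 * n) * 2 ^ (40 * n) :=
        Nat.mul_le_mul_left _ hlog
    _ = (23 ^ 782 * 2 ^ 40) ^ n := by rw [mul_pow, ← pow_mul, ← pow_mul]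
    _ ≤ (12 ^ 1000) ^ n :=
        Nat.pow_le_pow_left (by decide +kernel : 23 ^ 782 * 2 ^ 40 ≤ 12 ^ 1000) n
    _ = 12 ^ (1000 * n) := (pow_mul ..).symm

lemma pow_782_mul_le_of_twentyNine_le {p m n : ℕ} (hp : 29 ≤ p) (hm : 2 * m = p + 1)
    (hn : 10 ^ 6 ≤ n) : p ^ (782 * n) * (n * m ^ 2) ^ 1000 ≤ m ^ (1000 * n) := by
  have hlog : 2 ^ (1000 * n) * n ^ 1000 ≤ 2 ^ (1001 * n) :=
    calc 2 ^ (1000 * n) * n ^ 1000 ≤ 2 ^ (1000 * n) * (100 * n) ^ 1000 :=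
          Nat.mul_le_mul_left _ (pow_le_pow_left₀ (by positivity) (by omega) _)
      _ ≤ 2 ^ (1000 * n) * 2 ^ (n / 21) :=
          Nat.mul_le_mul_left _ (hundred_mul_pow_le_two_pow hn)
      _ ≤ 2 ^ (1001 * n) := by rw [← pow_add]; exact Nat.pow_le_pow_right two_pos (by omega)
  have hp2 : 2 ^ (1001 * n) ≤ p ^ (207 * n) := by
    rw [pow_mul, pow_mul]
    exact Nat.pow_le_pow_left
      ((by decide +kernel : 2 ^ 1001 ≤ 29 ^ 207).trans (Nat.pow_le_pow_left hp _)) n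
  refine Nat.le_of_mul_le_mul_left ?_ (pow_pos two_pos (1000 * n))
  calc 2 ^ (1000 * n) * (p ^ (782 * n) * (n * m ^ 2) ^ 1000)
      ≤ 2 ^ (1000 * n) * (p ^ (782 * n) * (n * p ^ 2) ^ 1000) := by gcongr; omega
    _ = p ^ (782 * n) * (2 ^ (1000 * n) * n ^ 1000) * p ^ 2000 := by ring
    _ ≤ p ^ (782 * n) * p ^ (207 * n) * p ^ (11 * n) := by
        gcongr
        · exact hlog.trans hp2
        · omega
        · omega
    _ = p ^ (1000 * n) := by rw [← pow_add, ← pow_add]; congr 1; ring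
    _ ≤ (2 * m) ^ (1000 * n) := pow_le_pow_left₀ (by positivity) (by omega) _
    _ = 2 ^ (1000 * n) * m ^ (1000 * n) := mul_pow ..

lemma mul_pow_le_succ_pow {n : ℕ} (hn : 10 ^ 6 ≤ n) :
    n * 20000 ^ (n - 2) ≤ 20001 ^ (n - 2) := by
  have hq : n ≤ 2 ^ ((n - 2) / 20000) := by
    have := mul_le_two_pow_of_le (c := 40002) (k₀ := 49) (k := (n - 2) / 20000)
      (by norm_num) (by norm_num) (by omega)
    omega
  calc n * 20000 ^ (n - 2) ≤ 2 ^ ((n - 2) / 20000) * 20000 ^ (n - 2) :=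
        Nat.mul_le_mul_right _ hq
    _ ≤ 20001 ^ (n - 2) :=
        pow_div_mul_pow_le_pow (two_mul_pow_self_le (by norm_num)) (by norm_num) _

theorem pow_782_mul_le_of_prime {p m n : ℕ} (hp : p.Prime) (h19 : 19 ≤ p)
    (hm : 2 * m = p + 1) (hn : 10 ^ 6 ≤ n) :
    p ^ (782 * n) * (n * m ^ 2) ^ 1000 ≤ m ^ (1000 * n) := by
  obtain rfl | rfl | h29 : p = 19 ∨ p = 23 ∨ 29 ≤ p := by
    rcases Nat.lt_or_ge p 29 with h29 | h29
    · interval_cases p <;> first | omega | norm_num at hp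
    · exact .inr (.inr h29)
  · obtain rfl : m = 10 := by omega
    exact nineteen_pow_782_mul_le hn
  · obtain rfl : m = 12 := by omega
    exact twentyThree_pow_782_mul_le hn
  · exact pow_782_mul_le_of_twentyNine_le h29 hm hn

theorem rpow_le_div_of_pow_mul_le {p m n : ℕ} (hn : 0 < n) (hm : 0 < m)
    (h : p ^ (782 * n) * (n * m ^ 2) ^ 1000 ≤ m ^ (1000 * n)) :
    (p : ℝ) ^ ((0.782 : ℝ) * n) ≤ ((m ^ n :) / (n * m ^ 2 :) : ℝ) := by
  refine le_of_pow_le_pow_left₀ (n := 1000) (by norm_num) (by positivity) ?_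
  rw [← Real.rpow_natCast, ← Real.rpow_mul (by positivity), div_pow,
    le_div_iff₀ (by positivity), show (0.782 : ℝ) * n * ((1000 : ℕ) : ℝ) = ((782 * n : ℕ) : ℝ) by push_cast; ring,
    Real.rpow_natCast]
  exact_mod_cast h.trans_eq (pow_mul' ..)

theorem pow_sub_two_le_div {m n : ℕ} (hm : 0 < m) (hn : 10 ^ 6 ≤ n) :
    ((2 * m : ℝ) / 2.0001) ^ (n - 2) ≤ ((m ^ n :) / (n * m ^ 2 :) : ℝ) := by
  have key : (20000 * m) ^ (n - 2) * (n * m ^ 2) ≤ m ^ n * 20001 ^ (n - 2) :=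
    calc (20000 * m) ^ (n - 2) * (n * m ^ 2)
        = n * 20000 ^ (n - 2) * (m ^ (n - 2) * m ^ 2) := by ring
      _ ≤ 20001 ^ (n - 2) * (m ^ (n - 2) * m ^ 2) :=
          Nat.mul_le_mul_right _ (mul_pow_le_succ_pow hn)
      _ = m ^ n * 20001 ^ (n - 2) := by rw [← pow_add, Nat.sub_add_cancel (by omega)]; ring
  rw [show (2 * m : ℝ) / 2.0001 = ((20000 * m : ℕ) : ℝ) / 20001 by push_cast; ring, div_pow,
    div_le_div_iff₀ (by positivity) (by positivity)]
  exact_mod_cast key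

/-- For `p ≥ 19` and `n ≥ 10⁶` there are large subsets of `𝔽_p^n` with no nontrivial
three-term arithmetic progression. -/
theorem cap_set_lower_bound_large_n (p : ℕ) [Fact p.Prime] (hp : 19 ≤ p) (n : ℕ)
    (hn : 10 ^ 6 ≤ n) :
    ∃ A : Finset (Fin n → ZMod p),
      (∀ x d : Fin n → ZMod p, d ≠ 0 → ¬(x ∈ A ∧ x + d ∈ A ∧ x + d + d ∈ A)) ∧
      (p : ℝ) ^ ((0.782 : ℝ) * n) ≤ A.card ∧
      (((p : ℝ) + 1) / 2.0001) ^ (n - 2) ≤ A.card := by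
  obtain ⟨m, hm⟩ : ∃ m, 2 * m = p + 1 := by
    obtain ⟨k, hk⟩ := (Fact.out : p.Prime).odd_of_ne_two (by omega)
    exact ⟨k + 1, by omega⟩
  obtain ⟨A, hA, hcard⟩ := exists_threeAPFree_card_ge hm.le n
  refine ⟨A, fun x d hd hmem => hd (hA.eq_zero_of_add_mem hmem.1 hmem.2.1 hmem.2.2), ?_, ?_⟩
  · exact (rpow_le_div_of_pow_mul_le (by omega) (by omega)
      (pow_782_mul_le_of_prime Fact.out hp hm hn)).trans hcard
  · rw [show (p : ℝ) + 1 = 2 * m by exact_mod_cast hm.symm]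
    exact (pow_sub_two_le_div (by omega) hn).trans hcard
end

section
/- Let p be an odd prime and n', m, r positive integers with 3r ≤ m. Let f': 𝔽_p^{n'} → ℝ, and for each x ∈ 𝔽_p^{n'} let v₁(x), …, v_r(x) ∈ 𝔽_p^m and h_x: 𝔽_p^r → ℝ with 𝔼_{w∈𝔽_p^r}[h_x(w)] = 0. Assume that for all pairwise distinct a, b, c ∈ 𝔽_p^{n'}, the 3r vectors v_j(a), v_j(b), v_j(c) (1 ≤ j ≤ r) are linearly independent in 𝔽_p^m. Define f: 𝔽_p^{n'} × 𝔽_p^m → ℝ by f(x,y) = f'(x) + h_x(y·v₁(x), …, y·v_r(x)), where y·v denotes the standard dot product. Then for every d = (d*, d') ∈ 𝔽_p^{n'} × 𝔽_p^m with d* ≠ 0, we have 𝔼_{z ∈ 𝔽_p^{n'}×𝔽_p^m}[f(z)f(z+d)f(z+2d)] = 𝔼_{x ∈ 𝔽_p^{n'}}[f'(x)f'(x+d*)f'(x+2d*)]. -/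
/-! Fix the first coordinate `x`. Since `x, x + d*, x + 2d*` are distinct (`p` is odd), the map
sending `y` to the `3r` dot products `y · vⱼ(x + i d*)` is a surjective linear map, so it pushes the
uniform measure on `𝔽_p^m` forward to the uniform measure on `𝔽_p^{3r}`, whatever the shifts by
`i d'`. In these coordinates the three perturbations depend on disjoint blocks of variables, so the
average of the product factorises and each mean-zero `h` averages away, leaving `f'` on each
fibre. -/

open Finset Matrix

theorem Matrix.mulVec_surjective_of_linearIndependent_row {K m n : Type*} [Field K] [Fintype m]
    [Fintype n] {A : Matrix m n K} (hA : LinearIndependent K A.row) :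
    Function.Surjective A.mulVec := by
  have hrange : LinearMap.range A.mulVecLin = ⊤ := Submodule.eq_top_of_finrank_eq <| by
    rw [← Matrix.rank, hA.rank_matrix, Module.finrank_fintype_fun_eq_card]
  exact LinearMap.range_eq_top.mp hrange

theorem AddMonoidHom.card_nsmul_sum_comp_of_surjective {M N β : Type*} [AddGroup M] [Fintype M]
    [AddGroup N] [Fintype N] [AddCommMonoid β] (Φ : M →+ N) (hΦ : Function.Surjective Φ)
    (g : N → β) :
    Fintype.card N • ∑ y, g (Φ y) = Fintype.card M • ∑ w, g w := by
  classical
  set c := #{y | Φ y = 0}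
  have hfibre (w : N) : #{y | Φ y = w} = c :=
    AddMonoidHom.card_fiber_eq_of_mem_range Φ (hΦ w) (hΦ 0)
  have hcard : Fintype.card M = Fintype.card N * c := by
    rw [← card_univ, card_eq_sum_card_fiberwise (f := Φ) (t := univ) (by simp)]
    simp [hfibre]
  rw [sum_comp, image_univ_of_surjective hΦ]
  simp only [hfibre, ← smul_sum, smul_smul, hcard]

theorem Fintype.sum_prod_curry_eq_prod_sum {ι κ α β : Type*} [Fintype ι] [DecidableEq ι]
    [Fintype κ] [DecidableEq κ] [Fintype α] [CommSemiring β] (F : ι → (κ → α) → β) :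
    ∑ w : ι × κ → α, ∏ i, F i (fun j => w (i, j)) = ∏ i, ∑ u : κ → α, F i u := by
  rw [Fintype.prod_sum]
  exact (Equiv.curry ι κ α).sum_comp fun u => ∏ i, F i (u i)

theorem sum_prod_add_of_sum_eq_zero {ι κ α : Type*} [Fintype ι] [DecidableEq ι] [Fintype κ]
    [DecidableEq κ] [Fintype α] (c : ι → ℝ) (h : ι → (κ → α) → ℝ)
    (hmean : ∀ i, ∑ u, h i u = 0) :
    ∑ w : ι × κ → α, ∏ i, (c i + h i (fun j => w (i, j)))
      = Fintype.card (ι × κ → α) * ∏ i, c i := by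
  rw [Fintype.sum_prod_curry_eq_prod_sum fun i u => c i + h i u]
  simp only [sum_add_distrib, hmean, add_zero, sum_const, card_univ, nsmul_eq_mul,
    prod_mul_distrib, prod_const, Fintype.card_fun, Fintype.card_prod]
  push_cast
  ring

theorem sum_prod_perturbed_eq {K X ι κ n : Type*} [Field K] [Fintype K] [Fintype ι]
    [DecidableEq ι] [Fintype κ] [DecidableEq κ] [Fintype n] [DecidableEq n]
    (f' : X → ℝ) (v : X → κ → n → K) (h : X → (κ → K) → ℝ) (hmean : ∀ x, ∑ w, h x w = 0)
    (f : X × (n → K) → ℝ) (hf : ∀ x y, f (x, y) = f' x + h x (fun j => ∑ i, y i * v x j i))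
    (a : ι → X) (hli : LinearIndependent K fun q : ι × κ => v (a q.1) q.2) (e : ι → n → K) :
    ∑ y : n → K, ∏ i, f (a i, y + e i) = (Fintype.card K : ℝ) ^ Fintype.card n * ∏ i, f' (a i) := by
  set A : Matrix (ι × κ) n K := Matrix.of fun q => v (a q.1) q.2
  set c : ι × κ → K := fun q => A q ⬝ᵥ e q.1
  set G : (ι × κ → K) → ℝ := fun w => ∏ i, (f' (a i) + h (a i) (fun j => w (i, j)))
  have hterm (y : n → K) : ∏ i, f (a i, y + e i) = G (A *ᵥ y + c) := by
    refine prod_congr rfl fun i _ => ?_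
    simp only [hf, Pi.add_apply, Matrix.mulVec, dotProduct, A, c, Matrix.of_apply, mul_add,
      sum_add_distrib, mul_comm]
  have hcount : Fintype.card (ι × κ → K) • ∑ y, G (A *ᵥ y + c)
      = Fintype.card (n → K) • ∑ w, G w := by
    rw [← Equiv.sum_comp (Equiv.addRight c) G]
    exact A.mulVecLin.toAddMonoidHom.card_nsmul_sum_comp_of_surjective
      (mulVec_surjective_of_linearIndependent_row hli) fun w => G (w + c)
  rw [sum_prod_add_of_sum_eq_zero _ _ fun i => hmean (a i)] at hcount
  have hpos : (Fintype.card (ι × κ → K) : ℝ) ≠ 0 := Nat.cast_ne_zero.mpr Fintype.card_ne_zero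
  simp only [hterm]
  apply mul_left_cancel₀ hpos
  simpa [nsmul_eq_mul, Fintype.card_fun, mul_left_comm] using hcount

theorem ZMod.add_self_ne_zero {p : ℕ} [Fact p.Prime] (hodd : Odd p) {V : Type*} [AddCommGroup V]
    [Module (ZMod p) V] {x : V} (hx : x ≠ 0) : x + x ≠ 0 := by
  have h2 : (2 : ZMod p) ≠ 0 := Ring.two_ne_zero <| by
    rw [ZMod.ringChar_zmod_n]
    rintro rfl
    exact Nat.not_odd_iff_even.mpr even_two hodd
  rw [← two_smul (ZMod p)]
  exact smul_ne_zero h2 hx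

theorem stability_lemma_general (p : ℕ) [Fact p.Prime] (hodd : Odd p) (n' m r : ℕ)
    (f' : (Fin n' → ZMod p) → ℝ)
    (v : (Fin n' → ZMod p) → Fin r → (Fin m → ZMod p))
    (h : (Fin n' → ZMod p) → (Fin r → ZMod p) → ℝ)
    (hmean : ∀ x, ∑ w : Fin r → ZMod p, h x w = 0)
    (hindep : ∀ a b c : Fin n' → ZMod p, a ≠ b → a ≠ c → b ≠ c →
      LinearIndependent (ZMod p) (fun q : Fin 3 × Fin r => v (![a, b, c] q.1) q.2))
    (f : ((Fin n' → ZMod p) × (Fin m → ZMod p)) → ℝ)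
    (hf : ∀ x y, f (x, y) = f' x + h x (fun j => ∑ i, y i * v x j i))
    (dstar : Fin n' → ZMod p) (d' : Fin m → ZMod p) (hd : dstar ≠ 0) :
    (∑ z : (Fin n' → ZMod p) × (Fin m → ZMod p),
        f z * f (z + (dstar, d')) * f (z + (dstar, d') + (dstar, d'))) / (p : ℝ) ^ (n' + m)
      = (∑ x, f' x * f' (x + dstar) * f' (x + dstar + dstar)) / (p : ℝ) ^ n' := by
  have hdd := ZMod.add_self_ne_zero hodd hd
  have hfibre (x : Fin n' → ZMod p) :
      ∑ y, f (x, y) * f (x + dstar, y + d') * f (x + dstar + dstar, y + d' + d')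
        = (p : ℝ) ^ m * (f' x * f' (x + dstar) * f' (x + dstar + dstar)) := by
    have hli := hindep x (x + dstar) (x + dstar + dstar) (by simpa using hd)
      (by simpa [add_assoc] using hdd) (by simpa using hd)
    simpa [Fin.prod_univ_three, ZMod.card, add_assoc, mul_assoc] using
      sum_prod_perturbed_eq f' v h hmean f hf _ hli ![0, d', d' + d']
  have hp : (p : ℝ) ^ m ≠ 0 := pow_ne_zero _ (Nat.cast_ne_zero.mpr (Fact.out : p.Prime).ne_zero)
  simp only [Fintype.sum_prod_type, Prod.mk_add_mk, hfibre, ← mul_sum, pow_add]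
  field_simp

/-- The stability lemma: perturbing each fibre by mean-zero functions read off along
generic directions does not change the 3-AP density for common differences that are
nonzero on the first block of coordinates. -/
theorem stability_lemma (p : ℕ) [Fact p.Prime] (hodd : Odd p) (n' m r : ℕ)
    (hn' : 0 < n') (hm : 0 < m) (hr : 0 < r) (hrm : 3 * r ≤ m)
    (f' : (Fin n' → ZMod p) → ℝ)
    (v : (Fin n' → ZMod p) → Fin r → (Fin m → ZMod p))
    (h : (Fin n' → ZMod p) → (Fin r → ZMod p) → ℝ)
    (hmean : ∀ x, ∑ w : Fin r → ZMod p, h x w = 0)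
    (hindep : ∀ a b c : Fin n' → ZMod p, a ≠ b → a ≠ c → b ≠ c →
      LinearIndependent (ZMod p) (fun q : Fin 3 × Fin r => v (![a, b, c] q.1) q.2))
    (f : ((Fin n' → ZMod p) × (Fin m → ZMod p)) → ℝ)
    (hf : ∀ x y, f (x, y) = f' x + h x (fun j => ∑ i, y i * v x j i))
    (dstar : Fin n' → ZMod p) (d' : Fin m → ZMod p) (hd : dstar ≠ 0) :
    (∑ z : (Fin n' → ZMod p) × (Fin m → ZMod p),
        f z * f (z + (dstar, d')) * f (z + (dstar, d') + (dstar, d'))) / (p : ℝ) ^ (n' + m)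
      = (∑ x, f' x * f' (x + dstar) * f' (x + dstar + dstar)) / (p : ℝ) ^ n' :=
  stability_lemma_general p hodd n' m r f' v h hmean hindep f hf dstar d' hd
end
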